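/- arXiv:2206.03551 — 2 statements merged into one kernel-verified Lean document; each statement's English description precedes it below -/
import Mathlib

section
/- Let X ⊂ ℝ^{d_x} and Y ⊂ ℝ^{d_y} be compact sets equipped with Lebesgue measure, let U be a compact subset of L²(X; ℝ^{d_u}), and let G : L²(X; ℝ^{d_u}) → L²(Y; ℝ^{d_s}) be any map. Let F = D ∘ A ∘ E, where E : L²(X; ℝ^{d_u}) → ℝ^p and A : ℝ^p → ℝ^n are arbitrary maps and D : ℝ^n → L²(Y; ℝ^{d_s}) is a linear map. Then sup_{u ∈ U} ‖F(u) − G(u)‖_{L²(Y)} ≥ d_n(G(U)), where d_n denotes the Kolmogorov n-width. -/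
open MeasureTheory ENNReal

universe u

section KolmogorovWidth

variable {R : Type*} {N : Type u} [Ring R] [SeminormedAddCommGroup N] [Module R N]

variable (R) in
noncomputable def kolmogorovWidth (n : ℕ) (S : Set N) : ℝ≥0∞ :=
  ⨅ (V : Submodule R N) (_ : Module.rank R V ≤ (n : Cardinal)),
    ⨆ s ∈ S, ⨅ v ∈ (V : Set N), (‖s - v‖₊ : ℝ≥0∞)

theorem iSup_image_biInf_nnnorm_sub_le {α : Type*} {U : Set α} {V : Set N} (G F : α → N)
    (hF : ∀ u ∈ U, F u ∈ V) :
    ⨆ s ∈ G '' U, ⨅ v ∈ V, (‖s - v‖₊ : ℝ≥0∞) ≤ ⨆ u ∈ U, (‖F u - G u‖₊ : ℝ≥0∞) := by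
  rw [iSup_image]
  refine iSup₂_mono fun u hu => ?_
  calc ⨅ v ∈ V, (‖G u - v‖₊ : ℝ≥0∞) ≤ ‖G u - F u‖₊ := biInf_le _ (hF u hu)
    _ = ‖F u - G u‖₊ := by rw [← nnnorm_neg, neg_sub]

theorem kolmogorovWidth_image_le_of_linearMap {M : Type u} [AddCommGroup M] [Module R M]
    {n : ℕ} (hM : Module.rank R M ≤ n) {α : Type*} (U : Set α) (G : α → N) (f : α → M)
    (D : M →ₗ[R] N) :
    kolmogorovWidth R n (G '' U) ≤ ⨆ u ∈ U, (‖D (f u) - G u‖₊ : ℝ≥0∞) :=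
  (iInf₂_le (LinearMap.range D) ((rank_range_le D).trans hM)).trans
    (iSup_image_biInf_nnnorm_sub_le G (D ∘ f) fun u _ => LinearMap.mem_range_self D (f u))

end KolmogorovWidth

theorem uniform_error_ge_kolmogorov_n_width_general
    {dx dy du ds : ℕ} {p n : ℕ}
    (X : Set (EuclideanSpace ℝ (Fin dx))) (Y : Set (EuclideanSpace ℝ (Fin dy)))
    (U : Set (Lp (EuclideanSpace ℝ (Fin du)) 2 (volume.restrict X)))
    (G : Lp (EuclideanSpace ℝ (Fin du)) 2 (volume.restrict X) →
         Lp (EuclideanSpace ℝ (Fin ds)) 2 (volume.restrict Y))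
    (E : Lp (EuclideanSpace ℝ (Fin du)) 2 (volume.restrict X) → (Fin p → ℝ))
    (A : (Fin p → ℝ) → (Fin n → ℝ))
    (D : (Fin n → ℝ) →ₗ[ℝ] Lp (EuclideanSpace ℝ (Fin ds)) 2 (volume.restrict Y)) :
    (⨆ u ∈ U, (‖D (A (E u)) - G u‖₊ : ℝ≥0∞)) ≥
      ⨅ (V : Submodule ℝ (Lp (EuclideanSpace ℝ (Fin ds)) 2 (volume.restrict Y)))
        (_ : Module.rank ℝ V ≤ (n : Cardinal)),
        ⨆ s ∈ G '' U, ⨅ v ∈ (V : Set (Lp (EuclideanSpace ℝ (Fin ds)) 2 (volume.restrict Y))),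
          (‖s - v‖₊ : ℝ≥0∞) :=
  kolmogorovWidth_image_le_of_linearMap (rank_fin_fun (R := ℝ) n).le U G (A ∘ E) D

/-- **Kolmogorov n-width lower bound for linear decoders (uniform norm).**
If `F = D ∘ A ∘ E` with `D` linear, then the uniform error over a compact set `U`
of input functions is bounded below by the Kolmogorov `n`-width of `G(U)`. -/
theorem uniform_error_ge_kolmogorov_n_width
    {dx dy du ds : ℕ} {p n : ℕ}
    (X : Set (EuclideanSpace ℝ (Fin dx))) (Y : Set (EuclideanSpace ℝ (Fin dy)))
    (hX : IsCompact X) (hY : IsCompact Y)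
    (U : Set (Lp (EuclideanSpace ℝ (Fin du)) 2 (volume.restrict X)))
    (hU : IsCompact U)
    (G : Lp (EuclideanSpace ℝ (Fin du)) 2 (volume.restrict X) →
         Lp (EuclideanSpace ℝ (Fin ds)) 2 (volume.restrict Y))
    (E : Lp (EuclideanSpace ℝ (Fin du)) 2 (volume.restrict X) → (Fin p → ℝ))
    (A : (Fin p → ℝ) → (Fin n → ℝ))
    (D : (Fin n → ℝ) →ₗ[ℝ] Lp (EuclideanSpace ℝ (Fin ds)) 2 (volume.restrict Y)) :
    (⨆ u ∈ U, (‖D (A (E u)) - G u‖₊ : ℝ≥0∞)) ≥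
      ⨅ (V : Submodule ℝ (Lp (EuclideanSpace ℝ (Fin ds)) 2 (volume.restrict Y)))
        (_ : Module.rank ℝ V ≤ (n : Cardinal)),
        ⨆ s ∈ G '' U, ⨅ v ∈ (V : Set (Lp (EuclideanSpace ℝ (Fin ds)) 2 (volume.restrict Y))),
          (‖s - v‖₊ : ℝ≥0∞) :=
  uniform_error_ge_kolmogorov_n_width_general X Y U G E A D
end

section
/- Fix 0 < t₀ < T, and for t ∈ [t₀, T] let u_t = 2π t cos(2π t ·) ∈ L²([0,1]; ℝ) and s_t = sin(2π t ·) ∈ L²([0,1]; ℝ). Then for every n, p ∈ ℕ, every linear map D : ℝ^n → L²([0,1]; ℝ), and every pairing of maps E : L²([0,1]; ℝ) → ℝ^p and A : ℝ^p → ℝ^n, there exists t ∈ [t₀, T] such that D(A(E(u_t))) ≠ s_t in L²([0,1]; ℝ). In other words, no operator learning architecture with a finite-dimensional linear decoder can exactly reproduce the antiderivative operator on this family of inputs. -/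
/-!
If every `s_t`, `t ∈ [t₀, T]`, lay in the range of `D`, a space of dimension at most `n` would
contain an infinite linearly independent family. The `s_t` are linearly independent:
`x ↦ sin (a x)` is an eigenvector of `f ↦ f (· + h) + f (· - h)` with eigenvalue `2 cos (a h)`,
and for `h = π / L` these eigenvalues are distinct for distinct `a ∈ (0, L]`. A linear relation
among the `s_t` holding only almost everywhere on `[0, 1]` holds on all of `ℝ`, because finite
sums of sines are real analytic.
-/

open MeasureTheory Real

noncomputable section

lemma isFiniteMeasure_Icc01 : IsFiniteMeasure (volume.restrict (Set.Icc (0:ℝ) 1)) := by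
  constructor
  rw [Measure.restrict_apply_univ, Real.volume_Icc]
  exact ENNReal.ofReal_lt_top

lemma memℒp_sin (t : ℝ) :
    MemLp (fun x : ℝ => Real.sin (2 * π * t * x)) 2 (volume.restrict (Set.Icc (0:ℝ) 1)) := by
  haveI := isFiniteMeasure_Icc01
  refine MemLp.of_bound ?_ 1 ?_
  · exact (Real.continuous_sin.comp (continuous_const.mul continuous_id)).aestronglyMeasurable
  · refine Filter.Eventually.of_forall fun x => ?_
    rw [Real.norm_eq_abs]
    exact Real.abs_sin_le_one _

lemma memℒp_u (t : ℝ) :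
    MemLp (fun x : ℝ => 2 * π * t * Real.cos (2 * π * t * x)) 2
      (volume.restrict (Set.Icc (0:ℝ) 1)) := by
  haveI := isFiniteMeasure_Icc01
  refine MemLp.of_bound ?_ (|2 * π * t|) ?_
  · exact (continuous_const.mul
      (Real.continuous_cos.comp (continuous_const.mul continuous_id))).aestronglyMeasurable
  · refine Filter.Eventually.of_forall fun x => ?_
    rw [Real.norm_eq_abs, abs_mul]
    calc |2 * π * t| * |Real.cos (2 * π * t * x)| ≤ |2 * π * t| * 1 :=
          mul_le_mul_of_nonneg_left (Real.abs_cos_le_one _) (abs_nonneg _)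
      _ = |2 * π * t| := mul_one _

/-- The element of `L²([0,1]; ℝ)` represented by `x ↦ sin (2π t x)`,
the antiderivative (vanishing at `0`) of `u_t`. -/
def sinL2 (t : ℝ) : Lp ℝ 2 (volume.restrict (Set.Icc (0:ℝ) 1)) :=
  (memℒp_sin t).toLp (fun x : ℝ => Real.sin (2 * π * t * x))

/-- The element of `L²([0,1]; ℝ)` represented by `x ↦ 2π t cos (2π t x)`. -/
def uL2 (t : ℝ) : Lp ℝ 2 (volume.restrict (Set.Icc (0:ℝ) 1)) :=
  (memℒp_u t).toLp (fun x : ℝ => 2 * π * t * Real.cos (2 * π * t * x))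

def shiftAddShift (h : ℝ) : Module.End ℝ (ℝ → ℝ) where
  toFun f x := f (x + h) + f (x - h)
  map_add' f g := by ext x; simp only [Pi.add_apply]; ring
  map_smul' c f := by ext x; simp only [Pi.smul_apply, smul_eq_mul, RingHom.id_apply]; ring

theorem hasEigenvector_shiftAddShift_sin_mul (h : ℝ) {a : ℝ} (ha : a ≠ 0) :
    (shiftAddShift h).HasEigenvector (2 * cos (a * h)) (fun x => sin (a * x)) := by
  refine Module.End.hasEigenvector_iff.2 ⟨Module.End.mem_eigenspace_iff.2 ?_, fun h0 => ?_⟩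
  · ext x
    simp only [shiftAddShift, LinearMap.coe_mk, AddHom.coe_mk, Pi.smul_apply, smul_eq_mul,
      mul_add, mul_sub, sin_add, sin_sub]
    ring
  · have hpeak := congrFun h0 (π / 2 / a)
    simp [mul_div_cancel₀ _ ha] at hpeak

theorem linearIndependent_sin_mul (L : ℝ) :
    LinearIndependent ℝ (fun a : Set.Ioc (0 : ℝ) L => fun x : ℝ => sin (a * x)) := by
  refine (shiftAddShift (π / L)).eigenvectors_linearIndependent'
    (fun a : Set.Ioc (0 : ℝ) L => 2 * cos (a * (π / L))) ?_ _
    fun a => hasEigenvector_shiftAddShift_sin_mul _ a.2.1.ne'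
  have hmem (a : Set.Ioc (0 : ℝ) L) : (a : ℝ) * (π / L) ∈ Set.Icc 0 π := by
    obtain ⟨a, ha₀, haL⟩ := a
    have hL : 0 < L := ha₀.trans_le haL
    refine ⟨by positivity, ?_⟩
    rw [mul_div_assoc', div_le_iff₀ hL, mul_comm π L]
    exact mul_le_mul_of_nonneg_right haL pi_pos.le
  intro a b hab
  have hcos := injOn_cos (hmem a) (hmem b) (by simpa using hab)
  exact Subtype.ext (mul_right_cancel₀ (div_pos pi_pos (a.2.1.trans_le a.2.2)).ne' hcos)

theorem AnalyticOnNhd.eq_zero_of_ae_restrict_Icc {E : Type*} [NormedAddCommGroup E]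
    [NormedSpace ℝ E] {f : ℝ → E} (hf : AnalyticOnNhd ℝ f Set.univ) {a b : ℝ} (hab : a < b)
    (h : f =ᵐ[volume.restrict (Set.Icc a b)] 0) : f = 0 := by
  have hIoo : Set.EqOn f 0 (Set.Ioo a b) :=
    Measure.eqOn_open_of_ae_eq (ae_restrict_of_ae_restrict_of_subset Set.Ioo_subset_Icc_self h)
      isOpen_Ioo (hf.continuousOn.mono (Set.subset_univ _)) continuousOn_const
  have hmid : f =ᶠ[nhds ((a + b) / 2)] 0 :=
    Filter.eventually_of_mem (isOpen_Ioo.mem_nhds ⟨by linarith, by linarith⟩) hIoo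
  funext x
  exact hf.eqOn_zero_of_preconnected_of_eventuallyEq_zero isPreconnected_univ
    (Set.mem_univ _) hmid (Set.mem_univ x)

theorem linearIndependent_toAEEqFun_of_analyticOnNhd {ι : Type*} {g : ι → C(ℝ, ℝ)}
    (hg : LinearIndependent ℝ fun i => ⇑(g i)) (hana : ∀ i, AnalyticOnNhd ℝ (g i) Set.univ)
    {a b : ℝ} (hab : a < b) :
    LinearIndependent ℝ fun i => ContinuousMap.toAEEqFunLinearMap (𝕜 := ℝ)
      (volume.restrict (Set.Icc a b)) (g i) := by
  rw [linearIndependent_iff'] at hg ⊢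
  intro s c hc
  set F := ∑ i ∈ s, c i • g i
  have hF : (F : ℝ → ℝ) =ᵐ[volume.restrict (Set.Icc a b)] 0 := by
    have : ContinuousMap.toAEEqFunLinearMap (𝕜 := ℝ) (volume.restrict (Set.Icc a b)) F = 0 := by
      simpa only [F, map_sum, map_smul] using hc
    exact AEEqFun.mk_eq_mk.1 this
  have hFana : AnalyticOnNhd ℝ F Set.univ := by
    simpa only [F, ContinuousMap.coe_sum, ContinuousMap.coe_smul] using
      Finset.analyticOnNhd_sum s fun i _ => (hana i).const_smul
  exact hg s c (by simpa only [F, ContinuousMap.coe_sum, ContinuousMap.coe_smul] using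
    hFana.eq_zero_of_ae_restrict_Icc hab hF)

theorem linearIndependent_sinL2 (T : ℝ) :
    LinearIndependent ℝ fun t : Set.Ioc (0 : ℝ) T => sinL2 t := by
  let sinMul (t : Set.Ioc (0 : ℝ) T) : C(ℝ, ℝ) := ⟨fun x => sin (2 * π * t * x), by fun_prop⟩
  let scale (t : Set.Ioc (0 : ℝ) T) : Set.Ioc (0 : ℝ) (2 * π * T) :=
    ⟨2 * π * t, mul_pos two_pi_pos t.2.1, mul_le_mul_of_nonneg_left t.2.2 two_pi_pos.le⟩
  have hscale : Function.Injective scale := fun t t' h =>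
    Subtype.ext (mul_left_cancel₀ two_pi_pos.ne' (congrArg Subtype.val h))
  have hli : LinearIndependent ℝ fun t => ⇑(sinMul t) :=
    (linearIndependent_sin_mul (2 * π * T)).comp scale hscale
  have hana (t) : AnalyticOnNhd ℝ (sinMul t) Set.univ := fun x _ => by
    dsimp only [sinMul, ContinuousMap.coe_mk]
    fun_prop
  refine .of_comp (Lp.LpSubmodule ℝ ℝ 2 (volume.restrict (Set.Icc (0 : ℝ) 1))).subtype ?_
  convert linearIndependent_toAEEqFun_of_analyticOnNhd hli hana zero_lt_one using 1
  funext t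
  rfl

/-- **No architecture with a finite-dimensional linear decoder reproduces the
antiderivative operator on the family `u_t = 2π t cos(2π t ·)`, `t ∈ [t₀, T]`.**
For any encoder `E`, approximator `A`, and linear decoder `D : ℝⁿ → L²([0,1]; ℝ)`,
there is some `t ∈ [t₀, T]` with `D(A(E(u_t))) ≠ sin(2π t ·)`. -/
theorem linear_decoder_cannot_reproduce_antiderivative
    (t₀ T : ℝ) (ht₀ : 0 < t₀) (hT : t₀ < T) (n p : ℕ)
    (D : (Fin n → ℝ) →ₗ[ℝ] Lp ℝ 2 (volume.restrict (Set.Icc (0:ℝ) 1)))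
    (E : Lp ℝ 2 (volume.restrict (Set.Icc (0:ℝ) 1)) → (Fin p → ℝ))
    (A : (Fin p → ℝ) → (Fin n → ℝ)) :
    ∃ t ∈ Set.Icc t₀ T, D (A (E (uL2 t))) ≠ sinL2 t := by
  by_contra! hD
  have : Infinite (Set.Icc t₀ T) := (Set.Icc_infinite hT).to_subtype
  have hrange (t : Set.Icc t₀ T) : sinL2 t ∈ LinearMap.range D := ⟨A (E (uL2 t)), hD t t.2⟩
  have hli : LinearIndependent ℝ (fun t : Set.Icc t₀ T => sinL2 t) :=
    (linearIndependent_sinL2 T).comp (Set.inclusion (Set.Icc_subset_Ioc ht₀ le_rfl))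
      (Set.inclusion_injective _)
  exact Module.Finite.not_linearIndependent_of_infinite (R := ℝ)
    (fun t : Set.Icc t₀ T => (⟨sinL2 t, hrange t⟩ : LinearMap.range D))
    (LinearIndependent.of_comp (LinearMap.range D).subtype hli)
end
end
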